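/- arXiv:1404.0471 — 7 statements merged into one kernel-verified Lean document; each statement's English description precedes it below -/
import Mathlib

section
/- For any real vector v = (v_0, ..., v_K), the quadratic form v^T H_i v of the Hessian H_i of T_i(τ) equals -(γ_i²/(τ_i(γ_i·S_i + τ_i)²)) · (τ_i · Σ_{j=0}^{i-1} v_j − v_i · S_i)², where S_i = Σ_{j=0}^{i-1} τ_j; in particular v^T H_i v ≤ 0. -/
open Real Finset

private lemma aux_deriv2 (γ a b S W : ℝ) (hγ : 0 < γ) (ha : 0 < a) (hS : 0 < S) :
    deriv (deriv (fun t : ℝ =>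
        (a + t * b) * Real.log (1 + γ * (S + t * W) / (a + t * b)))) 0
      = -(γ ^ 2 / (a * (γ * S + a) ^ 2)) * (a * W - b * S) ^ 2 := by
  set g : ℝ → ℝ := fun t => b * Real.log ((a + t * b) + γ * (S + t * W))
      - b * Real.log (a + t * b)
      + (a + t * b) * (b + γ * W) / ((a + t * b) + γ * (S + t * W)) - b with hg_def
  have hc1 : Continuous (fun t : ℝ => a + t * b) := by fun_prop
  have hc2 : Continuous (fun t : ℝ => (a + t * b) + γ * (S + t * W)) := by fun_prop
  have hU : ∀ᶠ t in nhds (0 : ℝ), 0 < a + t * b ∧ 0 < (a + t * b) + γ * (S + t * W) := by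
    have e1 : ∀ᶠ t in nhds (0 : ℝ), 0 < a + t * b :=
      Filter.Tendsto.eventually_const_lt (by simpa using ha) (hc1.continuousAt (x := 0))
    have e2 : ∀ᶠ t in nhds (0 : ℝ), 0 < (a + t * b) + γ * (S + t * W) :=
      Filter.Tendsto.eventually_const_lt (by simp; positivity) (hc2.continuousAt (x := 0))
    exact e1.and e2
  -- derivative of inner linear functions
  have hx : ∀ t : ℝ, HasDerivAt (fun t : ℝ => a + t * b) b t := by
    intro t
    simpa using ((hasDerivAt_id t).mul_const b).const_add a
  have hs : ∀ t : ℝ, HasDerivAt (fun t : ℝ => (a + t * b) + γ * (S + t * W)) (b + γ * W) t := by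
    intro t
    have h2 : HasDerivAt (fun t : ℝ => S + t * W) W t := by
      simpa using ((hasDerivAt_id t).mul_const W).const_add S
    exact (hx t).add (h2.const_mul γ)
  -- on U, deriv f = g
  have hfg : ∀ᶠ t in nhds (0 : ℝ),
      deriv (fun t : ℝ => (a + t * b) * Real.log (1 + γ * (S + t * W) / (a + t * b))) t = g t := by
    filter_upwards [hU.eventually_nhds] with t ht
    have htU := ht.self_of_nhds
    -- f agrees with f1 near t
    have heq : (fun t : ℝ => (a + t * b) * Real.log (1 + γ * (S + t * W) / (a + t * b)))
        =ᶠ[nhds t] (fun t : ℝ => (a + t * b) *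
          (Real.log ((a + t * b) + γ * (S + t * W)) - Real.log (a + t * b))) := by
      filter_upwards [ht] with u hu
      have hxu := hu.1
      have hXu := hu.2
      have : 1 + γ * (S + u * W) / (a + u * b)
          = ((a + u * b) + γ * (S + u * W)) / (a + u * b) := by
        field_simp
      rw [this, Real.log_div hXu.ne' hxu.ne']
    rw [heq.deriv_eq]
    have hlogX : HasDerivAt (fun u : ℝ => Real.log ((a + u * b) + γ * (S + u * W)))
        ((b + γ * W) / ((a + t * b) + γ * (S + t * W))) t := (hs t).log htU.2.ne'
    have hlogx : HasDerivAt (fun u : ℝ => Real.log (a + u * b)) (b / (a + t * b)) t :=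
      (hx t).log htU.1.ne'
    have hd : HasDerivAt (fun u : ℝ => (a + u * b) *
        (Real.log ((a + u * b) + γ * (S + u * W)) - Real.log (a + u * b)))
        (b * (Real.log ((a + t * b) + γ * (S + t * W)) - Real.log (a + t * b))
          + (a + t * b) * ((b + γ * W) / ((a + t * b) + γ * (S + t * W)) - b / (a + t * b))) t :=
      (hx t).mul (hlogX.sub hlogx)
    rw [hd.deriv]
    have h1 : (a + t * b) ≠ 0 := htU.1.ne'
    have h2 : (a + t * b) + γ * (S + t * W) ≠ 0 := htU.2.ne'
    simp only [hg_def]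
    rw [mul_sub (a + t * b), show (a + t * b) * (b / (a + t * b)) = b by field_simp]
    field_simp
    ring
  -- so the second derivative of f at 0 is deriv g 0
  have hdd : deriv (deriv (fun t : ℝ =>
      (a + t * b) * Real.log (1 + γ * (S + t * W) / (a + t * b)))) 0 = deriv g 0 :=
    Filter.EventuallyEq.deriv_eq hfg
  rw [hdd]
  -- now compute deriv g 0
  have h0x : (0:ℝ) < a + 0 * b := by simpa using ha
  have h0X : (0:ℝ) < (a + 0 * b) + γ * (S + 0 * W) := by simp; positivity
  have hlogX0 : HasDerivAt (fun u : ℝ => Real.log ((a + u * b) + γ * (S + u * W)))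
      ((b + γ * W) / ((a + 0 * b) + γ * (S + 0 * W))) 0 := (hs 0).log h0X.ne'
  have hlogx0 : HasDerivAt (fun u : ℝ => Real.log (a + u * b)) (b / (a + 0 * b)) 0 :=
    (hx 0).log h0x.ne'
  have hdiv : HasDerivAt (fun u : ℝ => (a + u * b) * (b + γ * W) / ((a + u * b) + γ * (S + u * W)))
      ((b * (b + γ * W) * ((a + 0 * b) + γ * (S + 0 * W))
        - (a + 0 * b) * (b + γ * W) * (b + γ * W)) / ((a + 0 * b) + γ * (S + 0 * W)) ^ 2) 0 :=
    ((hx 0).mul_const (b + γ * W)).div (hs 0) h0X.ne'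
  have hg' : HasDerivAt g
      ((b * ((b + γ * W) / ((a + 0 * b) + γ * (S + 0 * W))) - b * (b / (a + 0 * b)))
        + (b * (b + γ * W) * ((a + 0 * b) + γ * (S + 0 * W))
          - (a + 0 * b) * (b + γ * W) * (b + γ * W)) / ((a + 0 * b) + γ * (S + 0 * W)) ^ 2
        - 0) 0 := by
    exact (((hlogX0.const_mul b).sub (hlogx0.const_mul b)).add hdiv).sub (hasDerivAt_const 0 b)
  rw [hg'.deriv]
  have h1 : a ≠ 0 := ha.ne'
  have h2 : a + γ * S ≠ 0 := by positivity
  have h3 : γ * S + a ≠ 0 := by positivity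
  simp only [zero_mul, add_zero]
  field_simp
  ring

/-- For any direction `v`, the quadratic form `vᵀ H_i v` of the
Hessian of `T_i(τ) = τ_i ln(1 + γ S_i/τ_i)` (computed as the second derivative
of `t ↦ T_i(τ + t v)` at `t = 0`) equals
`-(γ²/(τ_i (γ S_i + τ_i)²)) (τ_i ∑_{j<i} v_j − v_i S_i)²`; in particular it is
`≤ 0`. -/
theorem stmt_1 (K : ℕ) (hK : 1 ≤ K) (i : Fin (K + 1)) (hi : 1 ≤ (i : ℕ))
    (γ : ℝ) (hγ : 0 < γ) (τ : Fin (K + 1) → ℝ) (hτ : ∀ j, 0 < τ j)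
    (v : Fin (K + 1) → ℝ) :
    deriv (deriv (fun t : ℝ =>
        (τ i + t * v i) * Real.log (1 + γ * (∑ j ∈ Finset.Iio i, (τ j + t * v j)) / (τ i + t * v i)))) 0
      = -(γ ^ 2 / (τ i * (γ * (∑ j ∈ Finset.Iio i, τ j) + τ i) ^ 2)) *
          (τ i * (∑ j ∈ Finset.Iio i, v j) - v i * (∑ j ∈ Finset.Iio i, τ j)) ^ 2 ∧
    deriv (deriv (fun t : ℝ =>
        (τ i + t * v i) * Real.log (1 + γ * (∑ j ∈ Finset.Iio i, (τ j + t * v j)) / (τ i + t * v i)))) 0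
      ≤ 0 := by
  have hsum : ∀ t : ℝ, ∑ j ∈ Finset.Iio i, (τ j + t * v j)
      = (∑ j ∈ Finset.Iio i, τ j) + t * (∑ j ∈ Finset.Iio i, v j) := by
    intro t; rw [Finset.sum_add_distrib, Finset.mul_sum]
  have hne : (Finset.Iio i).Nonempty := ⟨0, by rw [Finset.mem_Iio, Fin.lt_def, Fin.val_zero]; omega⟩
  have hS : 0 < ∑ j ∈ Finset.Iio i, τ j := Finset.sum_pos (fun j _ => hτ j) hne
  simp only [hsum]
  have key := aux_deriv2 γ (τ i) (v i) (∑ j ∈ Finset.Iio i, τ j) (∑ j ∈ Finset.Iio i, v j)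
    hγ (hτ i) hS
  refine ⟨key, ?_⟩
  rw [key]
  have h1 := hτ i
  apply mul_nonpos_of_nonpos_of_nonneg
  · rw [neg_nonpos]; positivity
  · positivity
end

section
/- The sum throughput T(τ) = Σ_{i=1}^K τ_i · ln(1 + γ_i · (Σ_{j=0}^{i-1} τ_j) / τ_i) is a concave function of τ on the positive orthant. -/
open Real Finset

lemma persp_aux (γ : ℝ) (hγ : 0 < γ) {x1 x2 t1 t2 a b : ℝ} (hx1 : 0 < x1) (hx2 : 0 < x2)
    (ht1 : 0 < t1) (ht2 : 0 < t2) (ha : 0 ≤ a) (hb : 0 ≤ b) (hab : a + b = 1) :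
    a * (t1 * Real.log (1 + γ * x1 / t1)) + b * (t2 * Real.log (1 + γ * x2 / t2)) ≤
      (a * t1 + b * t2) * Real.log (1 + γ * (a * x1 + b * x2) / (a * t1 + b * t2)) := by
  have hT : 0 < a * t1 + b * t2 := by
    rcases ha.lt_or_eq with h | h
    · have h1 := mul_pos h ht1
      have h2 := mul_nonneg hb ht2.le
      linarith
    · have hb1 : b = 1 := by linarith
      rw [← h, hb1]; simpa using ht2
  have hu1 : (0:ℝ) < 1 + γ * x1 / t1 := by
    have := div_pos (mul_pos hγ hx1) ht1; linarith
  have hu2 : (0:ℝ) < 1 + γ * x2 / t2 := by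
    have := div_pos (mul_pos hγ hx2) ht2; linarith
  set T := a * t1 + b * t2 with hTdef
  have hl : (0:ℝ) ≤ a * t1 / T := div_nonneg (mul_nonneg ha ht1.le) hT.le
  have hm : (0:ℝ) ≤ b * t2 / T := div_nonneg (mul_nonneg hb ht2.le) hT.le
  have hlm : a * t1 / T + b * t2 / T = 1 := by field_simp; exact hTdef.symm
  have key := (strictConcaveOn_log_Ioi.concaveOn).2 (Set.mem_Ioi.2 hu1)
    (Set.mem_Ioi.2 hu2) hl hm hlm
  simp only [smul_eq_mul] at key
  have hV : a * t1 / T * (1 + γ * x1 / t1) + b * t2 / T * (1 + γ * x2 / t2)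
      = 1 + γ * (a * x1 + b * x2) / T := by
    field_simp
    ring
  rw [hV] at key
  calc a * (t1 * Real.log (1 + γ * x1 / t1)) + b * (t2 * Real.log (1 + γ * x2 / t2))
      = T * (a * t1 / T * Real.log (1 + γ * x1 / t1)
          + b * t2 / T * Real.log (1 + γ * x2 / t2)) := by field_simp
    _ ≤ T * Real.log (1 + γ * (a * x1 + b * x2) / T) :=
        mul_le_mul_of_nonneg_left key hT.le

/-- The sum throughput
`T(τ) = ∑_{i=1}^K τ_i * ln(1 + γ_i * (∑_{j<i} τ_j) / τ_i)` is concave on the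
positive orthant. -/
theorem stmt_2 (K : ℕ) (hK : 1 ≤ K) (γ : Fin (K + 1) → ℝ) (hγ : ∀ i, 0 < γ i) :
    ConcaveOn ℝ {τ : Fin (K + 1) → ℝ | ∀ j, 0 < τ j}
      (fun τ => ∑ i ∈ Finset.Ioi (0 : Fin (K + 1)),
        τ i * Real.log (1 + γ i * (∑ j ∈ Finset.Iio i, τ j) / τ i)) := by
  constructor
  · intro τ hτ σ hσ a b ha hb hab j
    simp only [Pi.add_apply, Pi.smul_apply, smul_eq_mul]
    rcases ha.lt_or_eq with h | h
    · have h1 := mul_pos h (hτ j)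
      have h2 := mul_nonneg hb (hσ j).le
      linarith
    · have hb1 : b = 1 := by linarith
      rw [← h, hb1]; simpa using hσ j
  · intro τ hτ σ hσ a b ha hb hab
    simp only [smul_eq_mul, Pi.add_apply, Pi.smul_apply]
    rw [Finset.mul_sum, Finset.mul_sum, ← Finset.sum_add_distrib]
    apply Finset.sum_le_sum
    intro i hi
    have hi0 : (0 : Fin (K + 1)) < i := Finset.mem_Ioi.mp hi
    have hS1 : 0 < ∑ j ∈ Finset.Iio i, τ j :=
      Finset.sum_pos (fun j _ => hτ j) ⟨0, Finset.mem_Iio.2 hi0⟩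
    have hS2 : 0 < ∑ j ∈ Finset.Iio i, σ j :=
      Finset.sum_pos (fun j _ => hσ j) ⟨0, Finset.mem_Iio.2 hi0⟩
    have hlin : ∑ j ∈ Finset.Iio i, (a * τ j + b * σ j)
        = a * ∑ j ∈ Finset.Iio i, τ j + b * ∑ j ∈ Finset.Iio i, σ j := by
      rw [Finset.sum_add_distrib, Finset.mul_sum, Finset.mul_sum]
    rw [hlin]
    exact persp_aux (γ i) (hγ i) hS1 hS2 (hτ i) (hσ i) ha hb hab
end

section
/- The function g(t) = V(t) + t, with V(t) = (t/γ)(e^{D/t} − 1), is strictly convex on (0,∞) and attains its unique minimum at t^m = D/(W((γ−1)/e) + 1), where W is the principal Lambert W function; moreover the minimum value is g(t^m) = (D/γ)·e^{W((γ−1)/e)+1}. -/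
open Real Set

/-- The function `g(t) = V(t) + t` with
`V(t) = (t/γ)(e^{D/t} − 1)` is strictly convex on `(0,∞)` and attains its
unique minimum at `t^m = D/(W((γ−1)/e) + 1)`, with minimum value
`g(t^m) = (D/γ) e^{W((γ−1)/e)+1}`.  Here `w = W((γ−1)/e)` is characterized as
the principal Lambert W value: `w ≥ 0` and `w e^w = (γ−1)/e`. -/
theorem stmt_10 (γ D : ℝ) (hγ : 1 ≤ γ) (hD : 0 < D)
    (w : ℝ) (hw0 : 0 ≤ w) (hw : w * Real.exp w = (γ - 1) / Real.exp 1) :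
    StrictConvexOn ℝ (Set.Ioi 0)
      (fun t : ℝ => (t / γ) * (Real.exp (D / t) - 1) + t) ∧
    (∀ t ∈ Set.Ioi (0 : ℝ), t ≠ D / (w + 1) →
      (D / (w + 1) / γ) * (Real.exp (D / (D / (w + 1))) - 1) + D / (w + 1)
        < (t / γ) * (Real.exp (D / t) - 1) + t) ∧
    (D / (w + 1) / γ) * (Real.exp (D / (D / (w + 1))) - 1) + D / (w + 1)
      = (D / γ) * Real.exp (w + 1) := by
  have hγ0 : (0:ℝ) < γ := lt_of_lt_of_le one_pos hγ
  have hγ0' : γ ≠ 0 := hγ0.ne'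
  have hw1 : (0:ℝ) < w + 1 := by linarith
  set f : ℝ → ℝ := fun t => (t / γ) * (Real.exp (D / t) - 1) + t with hf_def
  set g : ℝ → ℝ := fun t => (1/γ) * ((1 - D/t) * Real.exp (D/t) - 1) + 1 with hg_def
  set tm : ℝ := D / (w + 1) with htm_def
  have htm : 0 < tm := div_pos hD hw1
  have hDtm : D / tm = w + 1 := by
    rw [htm_def]; field_simp
  -- derivative of f
  have hderiv : ∀ x : ℝ, x ≠ 0 → HasDerivAt f (g x) x := by
    intro x hx
    have hDx : HasDerivAt (fun t : ℝ => D / t) (-(D / x^2)) x := by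
      simpa [div_eq_mul_inv, mul_comm] using (hasDerivAt_inv hx).const_mul D
    have hexp : HasDerivAt (fun t : ℝ => Real.exp (D / t))
        (Real.exp (D / x) * -(D / x^2)) x := hDx.exp
    have hlin : HasDerivAt (fun t : ℝ => t / γ) (1 / γ) x := by
      simpa using (hasDerivAt_id x).div_const γ
    have hmul := hlin.mul (hexp.sub_const 1)
    have := (hmul.add (hasDerivAt_id x))
    refine this.congr_deriv ?_
    simp only [hg_def]
    field_simp
    ring
  -- derivative of g
  have hderiv2 : ∀ x : ℝ, x ≠ 0 →
      HasDerivAt g ((1/γ) * (D^2 / x^3) * Real.exp (D/x)) x := by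
    intro x hx
    have hDx : HasDerivAt (fun t : ℝ => D / t) (-(D / x^2)) x := by
      simpa [div_eq_mul_inv, mul_comm] using (hasDerivAt_inv hx).const_mul D
    have hexp : HasDerivAt (fun t : ℝ => Real.exp (D / t))
        (Real.exp (D / x) * -(D / x^2)) x := hDx.exp
    have h1 : HasDerivAt (fun t : ℝ => 1 - D / t) (D / x^2) x := by
      simpa using hDx.const_sub 1
    have hmul := (h1.mul hexp).sub_const 1
    have := (hmul.const_mul (1/γ)).add_const 1
    refine this.congr_deriv ?_
    field_simp
    ring
  have hcont : ContinuousOn f (Set.Ioi 0) := fun x hx =>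
    ((hderiv x (ne_of_gt hx)).continuousAt).continuousWithinAt
  -- φ(u) = (1-u) e^u strictly decreasing on [0,∞)
  have hphi : StrictAntiOn (fun u : ℝ => (1 - u) * Real.exp u) (Set.Ici 0) := by
    apply strictAntiOn_of_deriv_neg (convex_Ici 0)
    · exact Continuous.continuousOn (by continuity)
    · intro u hu
      rw [interior_Ici] at hu
      have hd : HasDerivAt (fun u : ℝ => (1 - u) * Real.exp u) (-(u * Real.exp u)) u := by
        have := (((hasDerivAt_id u).const_sub 1).mul (Real.hasDerivAt_exp u))
        refine this.congr_deriv ?_; simp only [id_eq]; ring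
      rw [hd.deriv]
      have : 0 < u * Real.exp u := mul_pos hu (Real.exp_pos u)
      linarith
  have hphitm : (1 - (w+1)) * Real.exp (w+1) = 1 - γ := by
    have : Real.exp (w + 1) = Real.exp w * Real.exp 1 := by rw [Real.exp_add]
    rw [this]
    have he : Real.exp 1 ≠ 0 := (Real.exp_pos 1).ne'
    have hw' : w * Real.exp w * Real.exp 1 = γ - 1 := by
      rw [hw]; field_simp
    nlinarith [hw']
  -- sign of g
  have hgpos : ∀ x : ℝ, tm < x → 0 < g x := by
    intro x hx
    have hx0 : 0 < x := htm.trans hx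
    have hu : D / x < w + 1 := by
      rw [← hDtm]; exact div_lt_div_of_pos_left hD htm hx
    have hukey : (1 - (w+1)) * Real.exp (w+1) < (1 - D/x) * Real.exp (D/x) :=
      hphi (le_of_lt (div_pos hD hx0)) (le_of_lt hw1) hu
    rw [hphitm] at hukey
    have key : 0 < (1 - D/x) * Real.exp (D/x) - 1 + γ := by linarith
    have hrw : g x = ((1 - D/x) * Real.exp (D/x) - 1 + γ) / γ := by
      simp only [hg_def]; field_simp
    rw [hrw]
    exact div_pos key hγ0
  have hgneg : ∀ x : ℝ, 0 < x → x < tm → g x < 0 := by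
    intro x hx0 hx
    have hu : w + 1 < D / x := by
      rw [← hDtm]; exact div_lt_div_of_pos_left hD hx0 hx
    have hukey : (1 - D/x) * Real.exp (D/x) < (1 - (w+1)) * Real.exp (w+1) :=
      hphi (le_of_lt hw1) (le_of_lt (div_pos hD hx0)) hu
    rw [hphitm] at hukey
    have key : (1 - D/x) * Real.exp (D/x) - 1 + γ < 0 := by linarith
    have hrw : g x = ((1 - D/x) * Real.exp (D/x) - 1 + γ) / γ := by
      simp only [hg_def]; field_simp
    rw [hrw]
    exact div_neg_of_neg_of_pos key hγ0
  -- strict convexity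
  have hconv : StrictConvexOn ℝ (Set.Ioi 0) f := by
    apply strictConvexOn_of_deriv2_pos (convex_Ioi 0) hcont
    intro x hx
    rw [interior_Ioi] at hx
    have hx0 : x ≠ 0 := ne_of_gt hx
    have hEq : Set.EqOn (deriv f) g (Set.Ioi 0) := fun y hy => (hderiv y (ne_of_gt hy)).deriv
    have : deriv (deriv f) x = deriv g x := by
      apply Filter.EventuallyEq.deriv_eq
      exact Filter.eventuallyEq_of_mem (isOpen_Ioi.mem_nhds hx) hEq
    have h2 : (deriv^[2] f) x = deriv (deriv f) x := rfl
    rw [h2, this, (hderiv2 x hx0).deriv]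
    exact mul_pos (mul_pos (one_div_pos.mpr hγ0) (div_pos (pow_pos hD 2) (pow_pos hx 3)))
      (Real.exp_pos _)
  -- minimum
  have hmin : ∀ t ∈ Set.Ioi (0:ℝ), t ≠ tm → f tm < f t := by
    intro t ht htne
    rcases lt_or_gt_of_ne htne with hlt | hgt
    · -- t < tm : f strictly anti on Ioc 0 tm
      have hanti : StrictAntiOn f (Set.Ioc 0 tm) := by
        apply strictAntiOn_of_deriv_neg (convex_Ioc 0 tm)
          (hcont.mono (fun y hy => hy.1))
        intro x hx
        rw [interior_Ioc] at hx
        rw [(hderiv x (ne_of_gt hx.1)).deriv]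
        exact hgneg x hx.1 hx.2
      exact hanti ⟨ht, le_of_lt hlt⟩ ⟨htm, le_refl tm⟩ hlt
    · -- tm < t : f strictly mono on Ici tm
      have hmono : StrictMonoOn f (Set.Ici tm) := by
        apply strictMonoOn_of_deriv_pos (convex_Ici tm)
          (hcont.mono (fun y hy => lt_of_lt_of_le htm hy))
        intro x hx
        rw [interior_Ici] at hx
        rw [(hderiv x (ne_of_gt (htm.trans hx))).deriv]
        exact hgpos x hx
      exact hmono (le_refl tm) (le_of_lt hgt) hgt
  -- minimum value
  have hval : f tm = (D / γ) * Real.exp (w + 1) := by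
    simp only [hf_def, htm_def]
    rw [show D / (D / (w+1)) = w + 1 from hDtm]
    have hE : Real.exp (w + 1) = Real.exp w * Real.exp 1 := Real.exp_add w 1
    have hw' : w * Real.exp w * Real.exp 1 = γ - 1 := by
      rw [hw]; field_simp
    have hEw : w * Real.exp (w + 1) = γ - 1 := by rw [hE, ← mul_assoc]; exact hw'
    field_simp
    linear_combination (-1) * hEw
  exact ⟨hconv, fun t ht htne => hmin t ht htne, hval⟩
end

section
/- At t^m = D/(W((γ−1)/e) + 1), the derivative of V(t) = (t/γ)(e^{D/t} − 1) equals −1. -/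
open Real Set

/-- At `t^m = D/(W((γ−1)/e) + 1)`, the derivative of
`V(t) = (t/γ)(e^{D/t} − 1)` equals `−1`.  Here `w = W((γ−1)/e)` is the
principal Lambert W value: `w ≥ 0` and `w e^w = (γ−1)/e`. -/
theorem stmt_11 (γ D : ℝ) (hγ : 1 ≤ γ) (hD : 0 < D)
    (w : ℝ) (hw0 : 0 ≤ w) (hw : w * Real.exp w = (γ - 1) / Real.exp 1) :
    deriv (fun t : ℝ => (t / γ) * (Real.exp (D / t) - 1)) (D / (w + 1)) = -1 := by
  have hγ0 : (0:ℝ) < γ := lt_of_lt_of_le one_pos hγ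
  have hw1 : (0:ℝ) < w + 1 := by linarith
  set t0 : ℝ := D / (w + 1) with ht0def
  have ht0pos : 0 < t0 := div_pos hD hw1
  have ht0 : t0 ≠ 0 := ne_of_gt ht0pos
  have h1 : HasDerivAt (fun t : ℝ => D / t) (-(D / t0 ^ 2)) t0 := by
    have := (hasDerivAt_inv ht0).const_mul D
    simpa [div_eq_mul_inv, mul_comm, neg_div] using this
  have h2 : HasDerivAt (fun t : ℝ => Real.exp (D / t))
      (Real.exp (D / t0) * (-(D / t0 ^ 2))) t0 := h1.exp
  have h3 : HasDerivAt (fun t : ℝ => Real.exp (D / t) - 1)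
      (Real.exp (D / t0) * (-(D / t0 ^ 2))) t0 := h2.sub_const 1
  have h4 : HasDerivAt (fun t : ℝ => t / γ) (1 / γ) t0 :=
    (hasDerivAt_id t0).div_const γ
  have h5 : HasDerivAt (fun t : ℝ => (t / γ) * (Real.exp (D / t) - 1))
      (1 / γ * (Real.exp (D / t0) - 1) +
        (t0 / γ) * (Real.exp (D / t0) * (-(D / t0 ^ 2)))) t0 := h4.mul h3
  rw [h5.deriv]
  have hDt0 : D / t0 = w + 1 := by
    rw [ht0def]; field_simp
  have hwe : w * Real.exp (w + 1) = γ - 1 := by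
    have he : Real.exp 1 ≠ 0 := (Real.exp_pos 1).ne'
    rw [Real.exp_add]
    field_simp at hw
    linear_combination hw
  rw [hDt0]
  have ht02 : t0 ^ 2 ≠ 0 := pow_ne_zero 2 ht0
  have hDval : D / t0 ^ 2 = (w + 1) / t0 := by
    rw [pow_two, div_mul_eq_div_div, hDt0]
  rw [hDval]
  field_simp
  linear_combination (-1) * hwe
end

section
/- For γ > 1 and c ≥ 0, the equation F(x) = c, where F(x) = ln(1 + γx) − γx/(1+γx) − γ/(γx+1), has the solution x = (1/γ)(e^{W((γ−1)/e^{c+1}) + c + 1} − 1), where W is the principal Lambert W function. -/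
open Real

/-- For `γ > 1` and `c ≥ 0`, the equation `F(x) = c`, where
`F(x) = ln(1 + γx) − γx/(1+γx) − γ/(1+γx)`, is solved by
`x = (1/γ)(e^{W((γ−1)/e^{c+1}) + c + 1} − 1)`.  Here
`w = W((γ−1)/e^{c+1})` is the principal Lambert W value: `w ≥ 0` and
`w e^w = (γ−1)/e^{c+1}`. -/
theorem stmt_12 (γ c : ℝ) (hγ : 1 < γ) (hc : 0 ≤ c)
    (w : ℝ) (hw0 : 0 ≤ w) (hw : w * Real.exp w = (γ - 1) / Real.exp (c + 1)) :
    Real.log (1 + γ * ((1 / γ) * (Real.exp (w + c + 1) - 1)))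
      - γ * ((1 / γ) * (Real.exp (w + c + 1) - 1))
          / (1 + γ * ((1 / γ) * (Real.exp (w + c + 1) - 1)))
      - γ / (1 + γ * ((1 / γ) * (Real.exp (w + c + 1) - 1))) = c := by
  have hγ0 : γ ≠ 0 := by linarith
  have hE : γ * ((1 / γ) * (Real.exp (w + c + 1) - 1)) = Real.exp (w + c + 1) - 1 := by
    field_simp
  rw [hE]
  have h1 : (1 : ℝ) + (Real.exp (w + c + 1) - 1) = Real.exp (w + c + 1) := by ring
  rw [h1]
  have hEpos : 0 < Real.exp (w + c + 1) := Real.exp_pos _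
  have hlog : Real.log (Real.exp (w + c + 1)) = w + c + 1 := Real.log_exp _
  rw [hlog]
  have hwE : w * Real.exp (w + c + 1) = γ - 1 := by
    have : Real.exp (w + c + 1) = Real.exp w * Real.exp (c + 1) := by
      rw [← Real.exp_add]; ring_nf
    rw [this, ← mul_assoc, hw]
    field_simp
  field_simp
  nlinarith [hwE]
end

section
/- Any optimal solution τ* of the total-time minimization problem satisfies the K-th constraint with equality: τ_K* · ln(1 + γ_K Σ_{j=0}^{K-1} τ_j* / τ_K*) = D_K. -/
open Real Finset

/-- Any optimal solution `τ*` of the total-time minimization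
problem (minimize `∑_{i=0}^K τ_i` over `τ_i ≥ 0` subject to
`τ_i ln(1 + γ_i (∑_{j<i} τ_j)/τ_i) ≥ D_i` for `i = 1,…,K`) satisfies the
`K`-th constraint with equality. -/
theorem stmt_15 (K : ℕ) (hK : 1 ≤ K) (γ D : Fin (K + 1) → ℝ)
    (hγ : ∀ i, 0 < γ i) (hD : ∀ i, i ≠ 0 → 0 < D i)
    (τstar : Fin (K + 1) → ℝ)
    (hmem : τstar ∈ {τ : Fin (K + 1) → ℝ | (∀ i, 0 ≤ τ i) ∧
      ∀ i, i ≠ 0 → D i ≤ τ i * Real.log (1 + γ i * (∑ j ∈ Finset.Iio i, τ j) / τ i)})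
    (hopt : IsMinOn (fun τ : Fin (K + 1) → ℝ => ∑ i, τ i)
      {τ : Fin (K + 1) → ℝ | (∀ i, 0 ≤ τ i) ∧
        ∀ i, i ≠ 0 → D i ≤ τ i * Real.log (1 + γ i * (∑ j ∈ Finset.Iio i, τ j) / τ i)}
      τstar) :
    τstar (Fin.last K) * Real.log (1 + γ (Fin.last K) *
        (∑ j ∈ Finset.Iio (Fin.last K), τstar j) / τstar (Fin.last K))
      = D (Fin.last K) := by
  obtain ⟨hpos, hcon⟩ := hmem
  set L : Fin (K + 1) := Fin.last K with hL
  have hL0 : L ≠ 0 := by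
    simp only [hL, Ne, Fin.ext_iff, Fin.val_last, Fin.val_zero]
    omega
  have hDL : 0 < D L := hD L hL0
  have hcL := hcon L hL0
  set S : ℝ := ∑ j ∈ Finset.Iio L, τstar j with hS
  set c : ℝ := γ L * S with hc
  -- τstar L > 0
  have hτ : 0 < τstar L := by
    rcases (hpos L).lt_or_eq with h | h
    · exact h
    · exfalso; rw [← h] at hcL; simp at hcL; linarith
  -- S > 0
  have hSpos : 0 < S := by
    rcases (Finset.sum_nonneg fun j _ => hpos j : (0:ℝ) ≤ S).lt_or_eq with h | h
    · exact h
    · exfalso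
      have hS0 : S = 0 := h.symm
      rw [hc, hS0] at hcL
      simp at hcL
      linarith
  have hcpos : 0 < c := mul_pos (hγ L) hSpos
  -- suppose strict inequality
  by_contra hne
  have hlt : D L < τstar L * Real.log (1 + c / τstar L) := lt_of_le_of_ne hcL (Ne.symm hne)
  set f : ℝ → ℝ := fun x => x * Real.log (1 + c / x) with hf
  have hct : ContinuousAt f (τstar L) := by
    apply ContinuousAt.mul continuousAt_id
    apply ContinuousAt.log
    · exact continuousAt_const.add (continuousAt_const.div continuousAt_id hτ.ne')
    · have : 0 < c / τstar L := div_pos hcpos hτ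
      linarith
  have h1 : ∀ᶠ x in nhdsWithin (τstar L) (Set.Iio (τstar L)), D L < f x :=
    eventually_nhdsWithin_of_eventually_nhds (hct.eventually_const_lt hlt)
  have h2 : ∀ᶠ x in nhdsWithin (τstar L) (Set.Iio (τstar L)), 0 < x :=
    eventually_nhdsWithin_of_eventually_nhds (eventually_gt_nhds hτ)
  have h3 : ∀ᶠ x in nhdsWithin (τstar L) (Set.Iio (τstar L)), x < τstar L :=
    eventually_mem_nhdsWithin
  obtain ⟨x, ⟨hx1, hx2⟩, hx3⟩ := ((h1.and h2).and h3).exists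
  set τ' : Fin (K + 1) → ℝ := Function.update τstar L x with hτ'
  have hjne : ∀ i (j : Fin (K + 1)), j ∈ Finset.Iio i → j ≠ L := by
    intro i j hj
    have hji : j < i := Finset.mem_Iio.mp hj
    have : i ≤ L := Fin.le_last i
    exact ne_of_lt (lt_of_lt_of_le hji this)
  have hsum : ∀ i : Fin (K + 1), ∑ j ∈ Finset.Iio i, τ' j = ∑ j ∈ Finset.Iio i, τstar j := by
    intro i
    refine Finset.sum_congr rfl fun j hj => ?_
    exact Function.update_of_ne (hjne i j hj) _ _
  have hmem' : τ' ∈ {τ : Fin (K + 1) → ℝ | (∀ i, 0 ≤ τ i) ∧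
      ∀ i, i ≠ 0 → D i ≤ τ i * Real.log (1 + γ i * (∑ j ∈ Finset.Iio i, τ j) / τ i)} := by
    constructor
    · intro i
      rcases eq_or_ne i L with h | h
      · subst h; rw [show τ' L = x from Function.update_self _ _ _]; exact hx2.le
      · rw [show τ' i = τstar i from Function.update_of_ne h _ _]; exact hpos i
    · intro i hi0
      rw [hsum i]
      rcases eq_or_ne i L with h | h
      · subst h
        rw [show τ' L = x from Function.update_self _ _ _]
        exact hx1.le
      · rw [show τ' i = τstar i from Function.update_of_ne h _ _]
        exact hcon i hi0
  have hsmall : ∑ i, τ' i < ∑ i, τstar i := by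
    have h1 : ∑ i, τ' i = x + ∑ i ∈ Finset.univ \ {L}, τstar i :=
      Finset.sum_update_of_mem (Finset.mem_univ L) _ _
    have h2 : ∑ i, τstar i = τstar L + ∑ i ∈ Finset.univ \ {L}, τstar i := by
      conv_lhs => rw [← Function.update_eq_self L τstar]
      exact Finset.sum_update_of_mem (Finset.mem_univ L) _ _
    rw [h1, h2]
    linarith
  exact absurd (hopt hmem') (by simpa using not_le.mpr hsmall)
end

section
/- For K = 1, the unique optimal solution of the total-time minimization problem is τ_1* = D_1/(W((γ_1−1)/e)+1) and τ_0* = (τ_1*/γ_1)(e^{D_1/τ_1*} − 1), with minimum total time C_1* = (D_1/γ_1)e^{W((γ_1−1)/e)+1}. -/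
open Real

/-- For `K = 1`, the unique optimal solution of the total-time
minimization problem (minimize `τ₀ + τ₁` over `τ₀, τ₁ ≥ 0` subject to
`τ₁ ln(1 + γ τ₀/τ₁) ≥ D`) is `τ₁* = D/(W((γ−1)/e)+1)` and
`τ₀* = (τ₁*/γ)(e^{D/τ₁*} − 1)`, with minimum total time
`τ₀* + τ₁* = (D/γ) e^{W((γ−1)/e)+1}`.  Here `w = W((γ−1)/e)` is the principal
Lambert W value: `w ≥ 0` and `w e^w = (γ−1)/e`. -/
theorem stmt_16 (γ D : ℝ) (hγ : 1 ≤ γ) (hD : 0 < D)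
    (w : ℝ) (hw0 : 0 ≤ w) (hw : w * Real.exp w = (γ - 1) / Real.exp 1) :
    let t1 : ℝ := D / (w + 1)
    let t0 : ℝ := (t1 / γ) * (Real.exp (D / t1) - 1)
    (0 ≤ t0 ∧ 0 ≤ t1 ∧ D ≤ t1 * Real.log (1 + γ * t0 / t1)) ∧
    (∀ τ0 τ1 : ℝ, 0 ≤ τ0 → 0 ≤ τ1 → D ≤ τ1 * Real.log (1 + γ * τ0 / τ1) →
      t0 + t1 ≤ τ0 + τ1 ∧ (t0 + t1 = τ0 + τ1 → τ0 = t0 ∧ τ1 = t1)) ∧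
    t0 + t1 = (D / γ) * Real.exp (w + 1) := by
  intro t1 t0
  have hγ0 : (0:ℝ) < γ := lt_of_lt_of_le one_pos hγ
  have hw1 : (0:ℝ) < w + 1 := by linarith
  set E : ℝ := Real.exp (w + 1) with hE
  have hEpos : 0 < E := Real.exp_pos _
  have hγw : γ - 1 = w * E := by
    have he : (0:ℝ) < Real.exp 1 := Real.exp_pos 1
    have h1 : E = Real.exp w * Real.exp 1 := by rw [hE, Real.exp_add]
    rw [h1]
    field_simp at hw
    nlinarith [hw]
  have hγ' : γ = 1 + w * E := by linarith
  have ht1def : t1 = D / (w + 1) := rfl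
  have ht1 : 0 < t1 := div_pos hD hw1
  have hDt1 : D / t1 = w + 1 := by
    rw [ht1def, div_div_eq_mul_div, mul_comm, mul_div_assoc, div_self hD.ne', mul_one]
  have ht0def : t0 = (t1 / γ) * (E - 1) := by
    show (t1 / γ) * (Real.exp (D / t1) - 1) = _
    rw [hDt1]
  have hE1 : 1 ≤ E := Real.one_le_exp (by linarith)
  have ht0 : 0 ≤ t0 := by
    rw [ht0def]
    exact mul_nonneg (div_pos ht1 hγ0).le (by linarith)
  -- total time identity
  have htot : t0 + t1 = (D / γ) * E := by
    rw [ht0def, ht1def, hγ']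
    have h1 : (1 : ℝ) + w * E ≠ 0 := by positivity
    field_simp
    ring
  -- tangent line inequality for exp
  have keyb : ∀ x : ℝ, E * (x - w) ≤ Real.exp x := by
    intro x
    have h1 := Real.add_one_le_exp (x - (w + 1))
    have h2 : Real.exp x = E * Real.exp (x - (w + 1)) := by
      rw [hE, ← Real.exp_add]; ring_nf
    nlinarith [hEpos]
  have keys : ∀ x : ℝ, x ≠ w + 1 → E * (x - w) < Real.exp x := by
    intro x hx
    have h1 := Real.add_one_lt_exp (show x - (w + 1) ≠ 0 by
      intro h; exact hx (by linarith))
    have h2 : Real.exp x = E * Real.exp (x - (w + 1)) := by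
      rw [hE, ← Real.exp_add]; ring_nf
    nlinarith [hEpos]
  refine ⟨⟨ht0, ht1.le, ?_⟩, ?_, htot⟩
  · -- feasibility
    have hγt0 : γ * t0 / t1 = E - 1 := by
      rw [ht0def]
      field_simp
    rw [hγt0]
    have h1 : (1 : ℝ) + (E - 1) = E := by ring
    rw [h1, hE, Real.log_exp, ht1def, div_mul_cancel₀ _ hw1.ne']
  · -- optimality
    intro τ0 τ1 hτ0 hτ1nn hfeas
    have hτ1 : 0 < τ1 := by
      rcases hτ1nn.lt_or_eq with h | h
      · exact h
      · exfalso; rw [← h] at hfeas; simp at hfeas; linarith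
    have hpos : 0 < 1 + γ * τ0 / τ1 := by
      have : 0 ≤ γ * τ0 / τ1 := div_nonneg (mul_nonneg hγ0.le hτ0) hτ1.le
      linarith
    have hlog : D / τ1 ≤ Real.log (1 + γ * τ0 / τ1) := by
      rw [div_le_iff₀ hτ1]
      linarith [hfeas]
    have hx : Real.exp (D / τ1) ≤ 1 + γ * τ0 / τ1 := by
      calc Real.exp (D / τ1) ≤ Real.exp (Real.log (1 + γ * τ0 / τ1)) :=
            Real.exp_le_exp.mpr hlog
        _ = 1 + γ * τ0 / τ1 := Real.exp_log hpos
    have hA : τ1 * Real.exp (D / τ1) ≤ τ1 + γ * τ0 := by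
      have h1 := mul_le_mul_of_nonneg_left hx hτ1.le
      have h2 : τ1 * (1 + γ * τ0 / τ1) = τ1 + γ * τ0 := by field_simp
      linarith
    have hDx : τ1 * (D / τ1) = D := by field_simp
    have hB : E * D - E * (w * τ1) ≤ τ1 * Real.exp (D / τ1) := by
      have h := mul_le_mul_of_nonneg_left (keyb (D / τ1)) hτ1.le
      have heq : E * D - E * (w * τ1) = τ1 * (E * (D / τ1 - w)) := by
        field_simp
      linarith [h, heq.ge, heq.le]
    have hγτ0 : γ * τ0 = τ0 + w * E * τ0 := by rw [hγ']; ring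
    have hγτ1 : γ * τ1 = τ1 + w * E * τ1 := by rw [hγ']; ring
    constructor
    · rw [htot, div_mul_eq_mul_div, div_le_iff₀ hγ0]
      linarith [hA, hB, hγτ0, hγτ1]
    · intro hsum
      have hsum' : D * E = (τ0 + τ1) * γ := by
        rw [htot] at hsum
        field_simp at hsum
        linarith
      have hxeq : D / τ1 = w + 1 := by
        by_contra hne
        have hBs : E * D - E * (w * τ1) < τ1 * Real.exp (D / τ1) := by
          have h := mul_lt_mul_of_pos_left (keys (D / τ1) hne) hτ1
          have heq : E * D - E * (w * τ1) = τ1 * (E * (D / τ1 - w)) := by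
            field_simp
          linarith [h, heq.ge, heq.le]
        linarith [hA, hBs, hγτ0, hγτ1, hsum']
      have hτ1eq : τ1 = t1 := by
        have hm : τ1 * (w + 1) = D := by rw [← hxeq]; field_simp
        rw [ht1def, eq_div_iff hw1.ne']
        exact hm
      exact ⟨by linarith, hτ1eq⟩
end
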